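/- If a sequence I = (I_n) of open intervals admits no pairwise disjoint subsequence J with λ([0,1] \ ⋃J) = 0, then there exists n ∈ ℕ such that λ([0,1] \ U_{2^{-n}}) > 0, where U_ε := ⋃{I_k : diam(I_k) < ε}. -/

import Mathlib

/-! If every `U_{2^{-n}}` covered almost all of `[0,1]`, almost every point of `[0,1]` would lie in
intervals of the sequence of arbitrarily small diameter. Vitali's covering theorem, applied to the
closures of these intervals, then gives a disjoint countable subfamily covering almost all of
`[0,1]`, and passing back to the open intervals loses only countably many endpoints. -/

open MeasureTheory Set

def itv (p : ℝ × ℝ) : Set ℝ := Set.Ioo p.1 p.2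

def Captures (I : ℕ → ℝ × ℝ) (x : ℝ) : Prop :=
  ∀ ε : ℝ, 0 < ε → ∃ n, Metric.diam (itv (I n)) < ε ∧ x ∈ itv (I n)

def IsVitaliCover (I : ℕ → ℝ × ℝ) (A : Set ℝ) : Prop :=
  ∀ x ∈ A, Captures I x

def Eliminates (I : ℕ → ℝ × ℝ) (S : Set ℕ) (A : Set ℝ) : Prop :=
  (S.Pairwise fun m n => Disjoint (itv (I m)) (itv (I n))) ∧
  volume (A \ ⋃ n ∈ S, itv (I n)) = 0

def Saturated (I : ℕ → ℝ × ℝ) : Prop :=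
  IsVitaliCover I (⋃ n, itv (I n))

/-- The paper's `U_ε`. -/
def smallUnion (I : ℕ → ℝ × ℝ) (ε : ℝ) : Set ℝ :=
  ⋃ k ∈ {k : ℕ | Metric.diam (itv (I k)) < ε}, itv (I k)

theorem captures_iff_forall_mem_smallUnion {I : ℕ → ℝ × ℝ} {x : ℝ} :
    Captures I x ↔ ∀ n : ℕ, x ∈ smallUnion I ((2:ℝ)⁻¹ ^ n) := by
  constructor
  · intro hx n
    obtain ⟨k, hk, hxk⟩ := hx _ (pow_pos (by norm_num : (0:ℝ) < 2⁻¹) n)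
    exact mem_biUnion hk hxk
  · intro hx ε hε
    obtain ⟨n, hn⟩ := exists_pow_lt_of_lt_one hε (by norm_num : (2:ℝ)⁻¹ < 1)
    obtain ⟨k, hk, hxk⟩ := mem_iUnion₂.1 (hx n)
    exact ⟨k, lt_trans hk hn, hxk⟩

theorem ae_captures_of_volume_sdiff_smallUnion_eq_zero {I : ℕ → ℝ × ℝ} {A : Set ℝ}
    (hA : ∀ n : ℕ, volume (A \ smallUnion I ((2:ℝ)⁻¹ ^ n)) = 0) :
    ∀ᵐ x, x ∈ A → Captures I x := by
  have hn : ∀ n : ℕ, ∀ᵐ x, x ∈ A → x ∈ smallUnion I ((2:ℝ)⁻¹ ^ n) := fun n =>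
    measure_mono_null (fun _ hx => Classical.not_imp.1 hx) (hA n)
  filter_upwards [ae_all_iff.2 hn] with x hx hxA
  exact captures_iff_forall_mem_smallUnion.2 fun n => hx n hxA

theorem exists_countable_pairwise_disjoint_Icc_of_isVitaliCover {I : ℕ → ℝ × ℝ} {A : Set ℝ}
    (hA : IsVitaliCover I A) :
    ∃ S : Set ℕ, S.Countable ∧
      (S.Pairwise fun m n => Disjoint (Icc (I m).1 (I m).2) (Icc (I n).1 (I n).2)) ∧
      volume (A \ ⋃ n ∈ S, Icc (I n).1 (I n).2) = 0 := by
  -- Vitali's theorem wants each point to be the centre of small sets, so the closed intervals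
  -- are indexed by pairs `(n, x)` with `x ∈ itv (I n)`.
  let t : Set (ℕ × ℝ) := {p | p.2 ∈ itv (I p.1)}
  let B : ℕ × ℝ → Set ℝ := fun p => Icc (I p.1).1 (I p.1).2
  let r : ℕ × ℝ → ℝ := fun p => (I p.1).2 - (I p.1).1
  have hB : ∀ p ∈ t, B p ⊆ Metric.closedBall p.2 (r p) := by
    rintro p ⟨hp₁, hp₂⟩ y ⟨hy₁, hy₂⟩
    rw [Metric.mem_closedBall, Real.dist_eq, abs_le]
    constructor <;> linarith
  have hvol : ∀ p ∈ t, volume (Metric.closedBall p.2 (3 * r p)) ≤ (6 : NNReal) * volume (B p) := by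
    rintro p -
    rw [Real.volume_closedBall, Real.volume_Icc, ENNReal.coe_ofNat,
      ← ENNReal.ofReal_ofNat, ← ENNReal.ofReal_mul (by norm_num)]
    exact ENNReal.ofReal_le_ofReal (by linarith)
  have hint : ∀ p ∈ t, (interior (B p)).Nonempty := fun p hp =>
    ⟨p.2, by rwa [interior_Icc]⟩
  have hsmall : ∀ x ∈ A, ∀ ε > (0:ℝ), ∃ p ∈ t, r p ≤ ε ∧ p.2 = x := by
    intro x hx ε hε
    obtain ⟨n, hn, hxn⟩ := hA x hx ε hε
    refine ⟨(n, x), hxn, ?_, rfl⟩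
    rw [itv, Real.diam_Ioo (hxn.1.trans hxn.2).le] at hn
    exact hn.le
  obtain ⟨u, -, hu_count, hu_disj, hu_null⟩ := Vitali.exists_disjoint_covering_ae volume A t 6
    r Prod.snd B hB hvol hint (fun _ _ => isClosed_Icc) hsmall
  refine ⟨Prod.fst '' u, hu_count.image _, ?_, ?_⟩
  · rintro _ ⟨p, hp, rfl⟩ _ ⟨q, hq, rfl⟩ hpq
    exact hu_disj hp hq (ne_of_apply_ne Prod.fst hpq)
  · simpa only [biUnion_image] using hu_null

theorem exists_eliminates_of_ae_captures {I : ℕ → ℝ × ℝ} {A : Set ℝ}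
    (hA : ∀ᵐ x, x ∈ A → Captures I x) : ∃ S : Set ℕ, Eliminates I S A := by
  obtain ⟨S, hS_count, hS_disj, hS_null⟩ :=
    exists_countable_pairwise_disjoint_Icc_of_isVitaliCover (A := {x ∈ A | Captures I x})
      fun _ hx => hx.2
  refine ⟨S, fun m hm n hn hmn => (hS_disj hm hn hmn).mono Ioo_subset_Icc_self Ioo_subset_Icc_self,
    ?_⟩
  have hIoo : ⋃ n ∈ S, itv (I n) =ᵐ[volume] ⋃ n ∈ S, Icc (I n).1 (I n).2 :=
    Filter.EventuallyEq.countable_bUnion hS_count fun _ _ => Ioo_ae_eq_Icc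
  rw [measure_congr ((Filter.EventuallyEq.refl _ A).diff hIoo)]
  refine measure_mono_null (fun x ⟨hxA, hxU⟩ => ?_) (measure_union_null hS_null (ae_iff.1 hA))
  by_cases hx : Captures I x
  · exact Or.inl ⟨⟨hxA, hx⟩, hxU⟩
  · exact Or.inr fun h => hx (h hxA)

theorem stmt10 (I : ℕ → ℝ × ℝ)
    (h : ¬ ∃ S : Set ℕ, Eliminates I S (Set.Icc (0:ℝ) 1)) :
    ∃ n : ℕ, 0 < volume (Set.Icc (0:ℝ) 1 \
      ⋃ k ∈ {k : ℕ | Metric.diam (itv (I k)) < (2:ℝ)⁻¹ ^ n}, itv (I k)) := by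
  by_contra! hnull
  exact h (exists_eliminates_of_ae_captures
    (ae_captures_of_volume_sdiff_smallUnion_eq_zero fun n => nonpos_iff_eq_zero.1 (hnull n)))
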